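/- arXiv:2011.12515 — 2 statements merged into one kernel-verified Lean document; each statement's English description precedes it below -/
import Mathlib

section
/- Let 0 < ε⁰ < ε¹ and 0 < p < 1 with (1 − p)·√ε¹ > p·√ε⁰, and set ρ̂* = (2 ε⁰ ε¹ / (ε¹ − ε⁰)) · ( ln((1 − p)/p) + (1/2)·ln(ε¹/ε⁰) ). Define φ(ρ̂) = (1 − p) · exp(−ρ̂/(2ε⁰)) / √(8 ε⁰ ρ̂) − p · exp(−ρ̂/(2ε¹)) / √(8 ε¹ ρ̂) for ρ̂ > 0. Then φ(ρ̂) > 0 for every ρ̂ with 0 < ρ̂ < ρ̂*, φ(ρ̂*) = 0, and φ(ρ̂) < 0 for every ρ̂ > ρ̂*. -/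
/-- For `0 < ε⁰ < ε¹`, `0 < p < 1` with `(1 − p)√ε¹ > p√ε⁰`, let
`ρ̂* = (2 ε⁰ ε¹/(ε¹ − ε⁰)) (ln((1 − p)/p) + (1/2) ln(ε¹/ε⁰))` and
`φ ρ̂ = (1 − p) exp(−ρ̂/(2ε⁰))/√(8 ε⁰ ρ̂) − p exp(−ρ̂/(2ε¹))/√(8 ε¹ ρ̂)`.
Then `φ > 0` on `(0, ρ̂*)`, `φ ρ̂* = 0`, and `φ < 0` on `(ρ̂*, ∞)`. -/
theorem phi_sign_around_zero_point
    (ε0 ε1 p : ℝ) (h0 : 0 < ε0) (h01 : ε0 < ε1) (hp0 : 0 < p) (hp1 : p < 1)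
    (hcond : (1 - p) * Real.sqrt ε1 > p * Real.sqrt ε0) :
    (∀ rhoHat : ℝ, 0 < rhoHat →
      rhoHat < (2 * ε0 * ε1 / (ε1 - ε0)) *
          (Real.log ((1 - p) / p) + (1 / 2) * Real.log (ε1 / ε0)) →
      0 < (1 - p) * Real.exp (-rhoHat / (2 * ε0)) / Real.sqrt (8 * ε0 * rhoHat) -
            p * Real.exp (-rhoHat / (2 * ε1)) / Real.sqrt (8 * ε1 * rhoHat)) ∧
    ((1 - p) * Real.exp (-((2 * ε0 * ε1 / (ε1 - ε0)) *
            (Real.log ((1 - p) / p) + (1 / 2) * Real.log (ε1 / ε0))) / (2 * ε0)) /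
          Real.sqrt (8 * ε0 * ((2 * ε0 * ε1 / (ε1 - ε0)) *
            (Real.log ((1 - p) / p) + (1 / 2) * Real.log (ε1 / ε0)))) -
        p * Real.exp (-((2 * ε0 * ε1 / (ε1 - ε0)) *
            (Real.log ((1 - p) / p) + (1 / 2) * Real.log (ε1 / ε0))) / (2 * ε1)) /
          Real.sqrt (8 * ε1 * ((2 * ε0 * ε1 / (ε1 - ε0)) *
            (Real.log ((1 - p) / p) + (1 / 2) * Real.log (ε1 / ε0)))) = 0) ∧
    (∀ rhoHat : ℝ,
      (2 * ε0 * ε1 / (ε1 - ε0)) *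
          (Real.log ((1 - p) / p) + (1 / 2) * Real.log (ε1 / ε0)) < rhoHat →
      (1 - p) * Real.exp (-rhoHat / (2 * ε0)) / Real.sqrt (8 * ε0 * rhoHat) -
          p * Real.exp (-rhoHat / (2 * ε1)) / Real.sqrt (8 * ε1 * rhoHat) < 0) := by
  have h1 : 0 < ε1 := h0.trans h01
  have hq : 0 < 1 - p := by linarith
  have hd : 0 < ε1 - ε0 := by linarith
  set A : ℝ := (1 - p) * Real.sqrt ε1 with hA
  set B : ℝ := p * Real.sqrt ε0 with hB
  have hs0 : 0 < Real.sqrt ε0 := Real.sqrt_pos.2 h0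
  have hs1 : 0 < Real.sqrt ε1 := Real.sqrt_pos.2 h1
  have hApos : 0 < A := mul_pos hq hs1
  have hBpos : 0 < B := mul_pos hp0 hs0
  set C : ℝ := 2 * ε0 * ε1 / (ε1 - ε0) with hC
  set L : ℝ := Real.log ((1 - p) / p) + (1 / 2) * Real.log (ε1 / ε0) with hL
  have hCpos : 0 < C := div_pos (by positivity) hd
  -- L = log A - log B
  have hLAB : L = Real.log A - Real.log B := by
    rw [hL, hA, hB, Real.log_mul hq.ne' hs1.ne', Real.log_mul hp0.ne' hs0.ne',
      Real.log_div hq.ne' hp0.ne', Real.log_div h1.ne' h0.ne',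
      Real.log_sqrt h1.le, Real.log_sqrt h0.le]
    ring
  have hLpos : 0 < L := by
    rw [hLAB]
    have := Real.log_lt_log hBpos hcond
    linarith
  have hstar : 0 < C * L := mul_pos hCpos hLpos
  -- numerator comparison: for any ρ, exponent comparison
  have hexp : ∀ ρ : ℝ, Real.log B + -ρ / (2 * ε1) - (Real.log A + -ρ / (2 * ε0))
      = (ρ - C * L) / C := by
    intro ρ
    rw [hC]
    have h2 : Real.log A = L + Real.log B := by rw [hLAB]; ring
    rw [h2]
    field_simp
    ring
  have hBe : ∀ ρ : ℝ, B * Real.exp (-ρ / (2 * ε1)) = Real.exp (Real.log B + -ρ / (2 * ε1)) := by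
    intro ρ; rw [Real.exp_add, Real.exp_log hBpos]
  have hAe : ∀ ρ : ℝ, A * Real.exp (-ρ / (2 * ε0)) = Real.exp (Real.log A + -ρ / (2 * ε0)) := by
    intro ρ; rw [Real.exp_add, Real.exp_log hApos]
  -- rewrite φ
  have key : ∀ ρ : ℝ, 0 < ρ →
      (1 - p) * Real.exp (-ρ / (2 * ε0)) / Real.sqrt (8 * ε0 * ρ) -
        p * Real.exp (-ρ / (2 * ε1)) / Real.sqrt (8 * ε1 * ρ)
      = (A * Real.exp (-ρ / (2 * ε0)) - B * Real.exp (-ρ / (2 * ε1))) /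
          (Real.sqrt ε0 * Real.sqrt ε1 * Real.sqrt (8 * ρ)) := by
    intro ρ hρ
    have hsρ : 0 < Real.sqrt (8 * ρ) := Real.sqrt_pos.2 (by positivity)
    have s0 : Real.sqrt (8 * ε0 * ρ) = Real.sqrt ε0 * Real.sqrt (8 * ρ) := by
      rw [show (8:ℝ) * ε0 * ρ = ε0 * (8 * ρ) by ring, Real.sqrt_mul h0.le]
    have s1 : Real.sqrt (8 * ε1 * ρ) = Real.sqrt ε1 * Real.sqrt (8 * ρ) := by
      rw [show (8:ℝ) * ε1 * ρ = ε1 * (8 * ρ) by ring, Real.sqrt_mul h1.le]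
    rw [s0, s1, hA, hB]
    field_simp
  refine ⟨?_, ?_, ?_⟩
  · intro ρ hρ hlt
    rw [key ρ hρ]
    apply div_pos _ (by positivity)
    have : Real.log B + -ρ / (2 * ε1) < Real.log A + -ρ / (2 * ε0) := by
      have := hexp ρ
      have hneg : (ρ - C * L) / C < 0 := div_neg_of_neg_of_pos (by linarith) hCpos
      linarith
    have := Real.exp_lt_exp.2 this
    rw [← hBe, ← hAe] at this
    linarith
  · rw [key _ hstar]
    apply div_eq_zero_iff.2
    left
    have : Real.log B + -(C * L) / (2 * ε1) = Real.log A + -(C * L) / (2 * ε0) := by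
      have := hexp (C * L)
      have : ((C * L) - C * L) / C = 0 := by simp
      have h3 := hexp (C * L)
      rw [this] at h3
      linarith
    have h4 := congrArg Real.exp this
    rw [← hBe, ← hAe] at h4
    linarith
  · intro ρ hlt
    have hρ : 0 < ρ := hstar.trans hlt
    rw [key ρ hρ]
    apply div_neg_of_neg_of_pos _ (by positivity)
    have : Real.log A + -ρ / (2 * ε0) < Real.log B + -ρ / (2 * ε1) := by
      have := hexp ρ
      have hposq : 0 < (ρ - C * L) / C := div_pos (by linarith) hCpos
      linarith
    have := Real.exp_lt_exp.2 this
    rw [← hBe, ← hAe] at this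
    linarith
end

section
/- Let 0 < ε⁰ < ε¹, 0 < p < 1, and C > 0, and define L : [0, ∞) → ℝ by L(ρ̂) = C·(1 − p)·(1 − erf(√(ρ̂/(2ε⁰)))) + C·p·erf(√(ρ̂/(2ε¹))), where erf(x) = (2/√π) ∫₀ˣ exp(−t²) dt. (i) If (1 − p)·√ε¹ > p·√ε⁰, then L attains its global minimum over [0, ∞) at the unique point ρ̂* = (2 ε⁰ ε¹/(ε¹ − ε⁰))·( ln((1 − p)/p) + (1/2)·ln(ε¹/ε⁰) ) > 0; that is, L(ρ̂*) ≤ L(ρ̂) for all ρ̂ ≥ 0, with strict inequality for ρ̂ ≠ ρ̂*. (ii) If (1 − p)·√ε¹ ≤ p·√ε⁰, then L is monotone nondecreasing on [0, ∞), so its global minimum over [0, ∞) is attained at ρ̂ = 0. -/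
/-!
Differentiating in `ρ̂ > 0`,
`L'(ρ̂) = C (2πρ̂)^{-1/2} (p e^{-ρ̂/(2ε¹)}/√ε¹ − (1 − p) e^{-ρ̂/(2ε⁰)}/√ε⁰)`.
The logarithm of the ratio of the two terms in the bracket is affine in `ρ̂`, with slope
`(ε¹ − ε⁰)/(2ε⁰ε¹) > 0` and zero at `ρ̂*`; hence `L' < 0` on `(0, ρ̂*)` and `L' > 0` beyond
`max 0 ρ̂*`. Finally `ρ̂* > 0` exactly when `(1 − p)√ε¹ > p√ε⁰`.
-/

/-- The error function `erf x = (2/√π) ∫₀ˣ exp (−t²) dt`. -/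
noncomputable def erf (x : ℝ) : ℝ :=
  (2 / Real.sqrt Real.pi) * ∫ t in (0:ℝ)..x, Real.exp (-t ^ 2)

open Real Set

lemma hasDerivAt_erf (x : ℝ) : HasDerivAt erf (2 / √π * exp (-x ^ 2)) x :=
  ((Continuous.integral_hasStrictDerivAt (by fun_prop) 0 x).hasDerivAt).const_mul _

@[fun_prop]
lemma continuous_erf : Continuous erf :=
  continuous_iff_continuousAt.2 fun x => (hasDerivAt_erf x).continuousAt

lemma hasDerivAt_erf_sqrt_div {ε x : ℝ} (hε : 0 < ε) (hx : 0 < x) :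
    HasDerivAt (fun y => erf √(y / (2 * ε)))
      ((√(2 * π * x))⁻¹ * (exp (-(x / (2 * ε))) / √ε)) x := by
  have hinner : HasDerivAt (fun y : ℝ => y / (2 * ε)) (1 / (2 * ε)) x := by
    simpa using (hasDerivAt_id x).div_const (2 * ε)
  refine ((hasDerivAt_erf _).comp x (hinner.sqrt (by positivity))).congr_deriv ?_
  rw [sq_sqrt (by positivity), sqrt_div hx.le, sqrt_mul (by positivity), sqrt_mul (by positivity),
    sqrt_mul (by positivity)]
  have h2 : √2 ^ 2 = 2 := sq_sqrt zero_le_two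
  have hε' : √ε ^ 2 = ε := sq_sqrt hε.le
  have : 0 < √π := sqrt_pos.2 pi_pos
  have : 0 < √x := sqrt_pos.2 hx
  have : 0 < √ε := sqrt_pos.2 hε
  field_simp
  rw [h2, hε']

/-- `q` times the `N(0, ε)` density at `√x`, up to the factor `(2π)^{-1/2}`. -/
noncomputable def weightedLikelihood (q ε x : ℝ) : ℝ := q * exp (-(x / (2 * ε))) / √ε

noncomputable def crossEntropyLoss (ε0 ε1 p C x : ℝ) : ℝ :=
  C * (1 - p) * (1 - erf √(x / (2 * ε0))) + C * p * erf √(x / (2 * ε1))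

noncomputable def optimalThreshold (ε0 ε1 p : ℝ) : ℝ :=
  2 * ε0 * ε1 / (ε1 - ε0) * (log ((1 - p) / p) + 1 / 2 * log (ε1 / ε0))

section

variable {ε0 ε1 p C x : ℝ}

lemma weightedLikelihood_pos {q ε : ℝ} (hq : 0 < q) (hε : 0 < ε) :
    0 < weightedLikelihood q ε x := by
  unfold weightedLikelihood; positivity

lemma log_weightedLikelihood {q ε : ℝ} (hq : 0 < q) (hε : 0 < ε) :
    log (weightedLikelihood q ε x) = log q - x / (2 * ε) - log ε / 2 := by
  rw [weightedLikelihood, log_div (by positivity) (by positivity), log_mul hq.ne' (exp_ne_zero _),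
    log_exp, log_sqrt hε.le]
  ring

lemma log_weightedLikelihood_sub (h0 : 0 < ε0) (h01 : ε0 < ε1) (hp0 : 0 < p) (hp1 : p < 1) :
    log (weightedLikelihood p ε1 x) - log (weightedLikelihood (1 - p) ε0 x) =
      (ε1 - ε0) / (2 * ε0 * ε1) * (x - optimalThreshold ε0 ε1 p) := by
  have h1 : 0 < ε1 := h0.trans h01
  have hq : 0 < 1 - p := sub_pos.2 hp1
  rw [log_weightedLikelihood hp0 h1, log_weightedLikelihood hq h0, optimalThreshold,
    log_div hq.ne' hp0.ne', log_div h1.ne' h0.ne']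
  have : ε1 - ε0 ≠ 0 := (sub_pos.2 h01).ne'
  field_simp
  ring

lemma lt_iff_of_log_sub_eq {a b c r : ℝ} (ha : 0 < a) (hb : 0 < b) (hc : 0 < c)
    (h : log a - log b = c * (x - r)) : b < a ↔ r < x := by
  rw [← log_lt_log_iff hb ha, ← sub_pos, h, mul_pos_iff_of_pos_left hc, sub_pos]

lemma weightedLikelihood_lt_iff (h0 : 0 < ε0) (h01 : ε0 < ε1) (hp0 : 0 < p) (hp1 : p < 1) :
    weightedLikelihood (1 - p) ε0 x < weightedLikelihood p ε1 x ↔ optimalThreshold ε0 ε1 p < x :=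
  lt_iff_of_log_sub_eq (weightedLikelihood_pos hp0 (h0.trans h01))
    (weightedLikelihood_pos (sub_pos.2 hp1) h0) (div_pos (sub_pos.2 h01) (mul_pos (mul_pos two_pos h0) (h0.trans h01)))
    (log_weightedLikelihood_sub h0 h01 hp0 hp1)

lemma weightedLikelihood_gt_iff (h0 : 0 < ε0) (h01 : ε0 < ε1) (hp0 : 0 < p) (hp1 : p < 1) :
    weightedLikelihood p ε1 x < weightedLikelihood (1 - p) ε0 x ↔ x < optimalThreshold ε0 ε1 p :=
  lt_iff_of_log_sub_eq (weightedLikelihood_pos (sub_pos.2 hp1) h0)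
    (weightedLikelihood_pos hp0 (h0.trans h01)) (div_pos (sub_pos.2 h01) (mul_pos (mul_pos two_pos h0) (h0.trans h01)))
    (by rw [← neg_sub, log_weightedLikelihood_sub h0 h01 hp0 hp1, ← mul_neg, neg_sub])

lemma continuous_crossEntropyLoss : Continuous (crossEntropyLoss ε0 ε1 p C) := by
  unfold crossEntropyLoss; fun_prop

lemma hasDerivAt_crossEntropyLoss (h0 : 0 < ε0) (h1 : 0 < ε1) (hx : 0 < x) :
    HasDerivAt (crossEntropyLoss ε0 ε1 p C) (C * (√(2 * π * x))⁻¹ *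
      (weightedLikelihood p ε1 x - weightedLikelihood (1 - p) ε0 x)) x :=
  ((((hasDerivAt_erf_sqrt_div h0 hx).const_sub 1).const_mul (C * (1 - p))).add
    ((hasDerivAt_erf_sqrt_div h1 hx).const_mul (C * p))).congr_deriv
      (by simp only [weightedLikelihood]; ring)

lemma crossEntropyLoss_strictAntiOn (h0 : 0 < ε0) (h01 : ε0 < ε1) (hp0 : 0 < p) (hp1 : p < 1)
    (hC : 0 < C) : StrictAntiOn (crossEntropyLoss ε0 ε1 p C) (Icc 0 (optimalThreshold ε0 ε1 p)) := by
  refine strictAntiOn_of_deriv_neg (convex_Icc _ _) continuous_crossEntropyLoss.continuousOn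
    fun x hx => ?_
  rw [interior_Icc] at hx
  rw [(hasDerivAt_crossEntropyLoss h0 (h0.trans h01) hx.1).deriv]
  have : 0 < x := hx.1
  exact mul_neg_of_pos_of_neg (by positivity)
    (sub_neg.2 ((weightedLikelihood_gt_iff h0 h01 hp0 hp1).2 hx.2))

lemma crossEntropyLoss_strictMonoOn (h0 : 0 < ε0) (h01 : ε0 < ε1) (hp0 : 0 < p) (hp1 : p < 1)
    (hC : 0 < C) :
    StrictMonoOn (crossEntropyLoss ε0 ε1 p C) (Ici (max 0 (optimalThreshold ε0 ε1 p))) := by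
  refine strictMonoOn_of_deriv_pos (convex_Ici _) continuous_crossEntropyLoss.continuousOn
    fun x hx => ?_
  rw [interior_Ici, mem_Ioi, max_lt_iff] at hx
  rw [(hasDerivAt_crossEntropyLoss h0 (h0.trans h01) hx.1).deriv]
  have : 0 < x := hx.1
  exact mul_pos (by positivity) (sub_pos.2 ((weightedLikelihood_lt_iff h0 h01 hp0 hp1).2 hx.2))

lemma optimalThreshold_pos_iff (h0 : 0 < ε0) (h01 : ε0 < ε1) (hp0 : 0 < p) (hp1 : p < 1) :
    0 < optimalThreshold ε0 ε1 p ↔ p * √ε0 < (1 - p) * √ε1 := by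
  have h1 : 0 < ε1 := h0.trans h01
  have hq : 0 < 1 - p := sub_pos.2 hp1
  have hK : 0 < 2 * ε0 * ε1 / (ε1 - ε0) := div_pos (by positivity) (sub_pos.2 h01)
  have hlog : log ((1 - p) / p) + 1 / 2 * log (ε1 / ε0) =
      log ((1 - p) * √ε1) - log (p * √ε0) := by
    rw [log_div hq.ne' hp0.ne', log_div h1.ne' h0.ne', log_mul hq.ne' (by positivity),
      log_mul hp0.ne' (by positivity), log_sqrt h1.le, log_sqrt h0.le]
    ring
  rw [optimalThreshold, hlog, mul_pos_iff_of_pos_left hK, sub_pos,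
    log_lt_log_iff (by positivity) (by positivity)]

end

lemma StrictAntiOn.lt_of_strictMonoOn {α β : Type*} [LinearOrder α] [Preorder β] {f : α → β}
    {a r x : α} (hanti : StrictAntiOn f (Icc a r)) (hmono : StrictMonoOn f (Ici r)) (har : a ≤ r)
    (hx : a ≤ x) (hne : x ≠ r) : f r < f x := by
  rcases hne.lt_or_gt with hlt | hgt
  · exact hanti ⟨hx, hlt.le⟩ ⟨har, le_rfl⟩ hlt
  · exact hmono self_mem_Ici hgt.le hgt

/-- Proposition 2 in the `ρ̂` coordinate: for
`L ρ̂ = C (1 − p)(1 − erf (√(ρ̂/(2ε⁰)))) + C p erf (√(ρ̂/(2ε¹)))` on `[0, ∞)`,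
(i) if `(1 − p)√ε¹ > p√ε⁰` then `L` attains its global minimum at the unique point
`ρ̂* = (2 ε⁰ ε¹/(ε¹ − ε⁰)) (ln((1 − p)/p) + (1/2) ln(ε¹/ε⁰)) > 0`;
(ii) if `(1 − p)√ε¹ ≤ p√ε⁰` then `L` is monotone nondecreasing on `[0, ∞)`, so the
global minimum is attained at `ρ̂ = 0`. -/
theorem crossEntropyLoss_global_min
    (ε0 ε1 p C : ℝ) (h0 : 0 < ε0) (h01 : ε0 < ε1) (hp0 : 0 < p) (hp1 : p < 1)
    (hC : 0 < C) :
    ((1 - p) * Real.sqrt ε1 > p * Real.sqrt ε0 →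
      0 < (2 * ε0 * ε1 / (ε1 - ε0)) *
          (Real.log ((1 - p) / p) + (1 / 2) * Real.log (ε1 / ε0)) ∧
      (∀ x : ℝ, 0 ≤ x →
        C * (1 - p) * (1 - erf (Real.sqrt ((2 * ε0 * ε1 / (ε1 - ε0)) *
              (Real.log ((1 - p) / p) + (1 / 2) * Real.log (ε1 / ε0)) / (2 * ε0)))) +
            C * p * erf (Real.sqrt ((2 * ε0 * ε1 / (ε1 - ε0)) *
              (Real.log ((1 - p) / p) + (1 / 2) * Real.log (ε1 / ε0)) / (2 * ε1))) ≤
          C * (1 - p) * (1 - erf (Real.sqrt (x / (2 * ε0)))) +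
            C * p * erf (Real.sqrt (x / (2 * ε1)))) ∧
      (∀ x : ℝ, 0 ≤ x →
        x ≠ (2 * ε0 * ε1 / (ε1 - ε0)) *
            (Real.log ((1 - p) / p) + (1 / 2) * Real.log (ε1 / ε0)) →
        C * (1 - p) * (1 - erf (Real.sqrt ((2 * ε0 * ε1 / (ε1 - ε0)) *
              (Real.log ((1 - p) / p) + (1 / 2) * Real.log (ε1 / ε0)) / (2 * ε0)))) +
            C * p * erf (Real.sqrt ((2 * ε0 * ε1 / (ε1 - ε0)) *
              (Real.log ((1 - p) / p) + (1 / 2) * Real.log (ε1 / ε0)) / (2 * ε1))) <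
          C * (1 - p) * (1 - erf (Real.sqrt (x / (2 * ε0)))) +
            C * p * erf (Real.sqrt (x / (2 * ε1))))) ∧
    ((1 - p) * Real.sqrt ε1 ≤ p * Real.sqrt ε0 →
      MonotoneOn (fun x : ℝ =>
          C * (1 - p) * (1 - erf (Real.sqrt (x / (2 * ε0)))) +
            C * p * erf (Real.sqrt (x / (2 * ε1)))) (Set.Ici 0) ∧
      (∀ x : ℝ, 0 ≤ x →
        C * (1 - p) * (1 - erf (Real.sqrt ((0:ℝ) / (2 * ε0)))) +
            C * p * erf (Real.sqrt ((0:ℝ) / (2 * ε1))) ≤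
          C * (1 - p) * (1 - erf (Real.sqrt (x / (2 * ε0)))) +
            C * p * erf (Real.sqrt (x / (2 * ε1))))) := by
  have hanti := crossEntropyLoss_strictAntiOn (C := C) h0 h01 hp0 hp1 hC
  have hmono := crossEntropyLoss_strictMonoOn (C := C) h0 h01 hp0 hp1 hC
  refine ⟨fun hgt => ?_, fun hle => ?_⟩
  · have hr := (optimalThreshold_pos_iff h0 h01 hp0 hp1).2 hgt
    rw [max_eq_right hr.le] at hmono
    have hlt : ∀ x, 0 ≤ x → x ≠ optimalThreshold ε0 ε1 p →
        crossEntropyLoss ε0 ε1 p C (optimalThreshold ε0 ε1 p) < crossEntropyLoss ε0 ε1 p C x :=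
      fun x hx hne => hanti.lt_of_strictMonoOn hmono hr.le hx hne
    refine ⟨hr, fun x hx => ?_, hlt⟩
    rcases eq_or_ne x (optimalThreshold ε0 ε1 p) with rfl | hne
    · exact le_rfl
    · exact (hlt x hx hne).le
  · have hr : optimalThreshold ε0 ε1 p ≤ 0 :=
      not_lt.1 fun hr => (not_lt.2 hle) ((optimalThreshold_pos_iff h0 h01 hp0 hp1).1 hr)
    rw [max_eq_left hr] at hmono
    exact ⟨hmono.monotoneOn, fun x hx => hmono.monotoneOn self_mem_Ici hx hx⟩
end
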